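/- If n ≥ 1, m ≥ 1, 1 ≤ a ≤ 9 and C_n = a·(10^m−1)/9, then (m, n, a) = (1, 1, 3) or (m, n, a) = (2, 3, 9). -/
import Mathlib


def C : ℕ → ℕ
  | 0 => 1
  | 1 => 3
  | n + 2 => 6 * C (n + 1) - C n

lemma C_mono : ∀ n, C n ≤ C (n + 1) := by
  intro n
  induction n with
  | zero => simp [C]
  | succ k ih =>
    have h1 : C (k + 1 + 1) = 6 * C (k + 1) - C k := rfl
    omega

lemma C_le_of_le {n m : ℕ} (h : n ≤ m) : C n ≤ C m :=
  monotone_nat_of_le_succ C_mono h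

lemma C_rec (n : ℕ) : C (n + 2) + C n = 6 * C (n + 1) := by
  have h1 : C (n + 2) = 6 * C (n + 1) - C n := rfl
  have h2 := C_mono n
  omega

lemma C_pair : ∀ n, (C n % 280, C (n + 1) % 280) ∈
    ([(1,3),(3,17),(17,99),(99,17),(17,3),(3,1)] : List (ℕ × ℕ)) := by
  intro n
  induction n with
  | zero => simp [C]
  | succ k ih =>
    have hr : C (k + 1 + 1) + C k = 6 * C (k + 1) := C_rec k
    simp only [List.mem_cons, List.mem_singleton, Prod.mk.injEq, List.mem_nil_iff, or_false] at ih ⊢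
    rcases ih with ⟨h1, h2⟩ | ⟨h1, h2⟩ | ⟨h1, h2⟩ | ⟨h1, h2⟩ | ⟨h1, h2⟩ | ⟨h1, h2⟩ <;> omega

lemma C_mod : ∀ n, C n % 280 = 1 ∨ C n % 280 = 3 ∨ C n % 280 = 17 ∨ C n % 280 = 99 := by
  intro n
  have := C_pair n
  simp only [List.mem_cons, List.mem_singleton, Prod.mk.injEq, List.mem_nil_iff, or_false] at this
  rcases this with ⟨h1, _⟩ | ⟨h1, _⟩ | ⟨h1, _⟩ | ⟨h1, _⟩ | ⟨h1, _⟩ | ⟨h1, _⟩ <;> omega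

lemma ten_pow_mod : ∀ m, 3 ≤ m → 10 ^ m % 280 = 40 ∨ 10 ^ m % 280 = 80 ∨
    10 ^ m % 280 = 120 ∨ 10 ^ m % 280 = 160 ∨ 10 ^ m % 280 = 200 ∨ 10 ^ m % 280 = 240 := by
  intro m hm
  induction m with
  | zero => omega
  | succ k ih =>
    rcases Nat.lt_or_ge k 3 with hk | hk
    · interval_cases k <;> simp_all
    · have := ih (by omega)
      have h : 10 ^ (k + 1) = 10 * 10 ^ k := by ring
      rcases this with h1 | h1 | h1 | h1 | h1 | h1 <;> omega

theorem stmt3 (m n a : ℕ) (hn : 1 ≤ n) (hm : 1 ≤ m) (ha1 : 1 ≤ a) (ha9 : a ≤ 9)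
    (h : 9 * C n = a * (10 ^ m - 1)) :
    (m = 1 ∧ n = 1 ∧ a = 3) ∨ (m = 2 ∧ n = 3 ∧ a = 9) := by
  have hm2 : m ≤ 2 := by
    by_contra hm3
    push_neg at hm3
    have ht := ten_pow_mod m hm3
    have hc := C_mod n
    have hX : 1 ≤ 10 ^ m := Nat.one_le_pow _ _ (by norm_num)
    interval_cases a <;>
      rcases ht with h1 | h1 | h1 | h1 | h1 | h1 <;>
      rcases hc with h2 | h2 | h2 | h2 <;> omega
  -- now m ∈ {1, 2}, so C n ≤ 99, hence n ≤ 3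
  have hn3 : n ≤ 3 := by
    by_contra hn4
    push_neg at hn4
    have h4 : C 4 ≤ C n := C_le_of_le hn4
    have hc4 : C 4 = 577 := by norm_num [C]
    have hpow : 10 ^ m ≤ 100 := by
      calc 10 ^ m ≤ 10 ^ 2 := Nat.pow_le_pow_right (by norm_num) hm2
      _ = 100 := by norm_num
    have h99 : 10 ^ m - 1 ≤ 99 := by omega
    have : a * (10 ^ m - 1) ≤ 9 * 99 := Nat.mul_le_mul ha9 h99
    omega
  have hc1 : C 1 = 3 := rfl
  have hc2 : C 2 = 17 := by norm_num [C]
  have hc3 : C 3 = 99 := by norm_num [C]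
  interval_cases m <;> interval_cases n <;> simp_all <;> omega
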